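/- arXiv:2306.08288 — 2 statements merged into one kernel-verified Lean document; each statement's English description precedes it below -/
import Mathlib

section
/- (Theorem 1, Step Two: redundancy with the union variable as target equals redundancy with Y as target, for the ordering Q ⊏ X iff H[Q|X] = 0.) Let Y and X₁, …, X_n be measurable functions Ω → ℕ with finite range on a probability space (Ω, μ), and let U := ⟨X₁, …, X_n, Y⟩ be the joint variable. Then sSup { I[Q : U] | Q : Ω → ℕ measurable with finite range, H[Q|Y] = 0 and H[Q|X_j] = 0 for all j } = sSup { I[Q : Y] | Q : Ω → ℕ measurable with finite range, H[Q|Y] = 0 and H[Q|X_j] = 0 for all j }, i.e. Red(U : X₁,…,X_n, Y) = Red(Y : X₁,…,X_n, Y). -/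
/-!
If `H[Q|Y] = 0` then on every fibre `{Y = y}` of positive mass the conditional law of `Q` has
entropy zero, hence is a point mass; so `Q = φ ∘ Y` almost surely. Any variable `Z` from which `Y`
can be read off (such as the joint variable `U`) then determines `Q` too, and the pair `⟨Q, Z⟩`
is an injective image of `Z` up to a null set, so `I[Q : Z] = H[Q]`. Thus `I[Q : U] = I[Q : Y]` for
every admissible `Q`, and the two suprema range over the same set.
-/

open MeasureTheory ProbabilityTheory Real

/-- Shannon entropy (natural logarithm) of a random variable `X : Ω → S`:
`H[X] = ∑ₓ -P(X = x) log P(X = x)`. -/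
noncomputable def entropy {Ω S : Type*} [MeasurableSpace Ω] [MeasurableSpace S]
    (μ : Measure Ω) (X : Ω → S) : ℝ :=
  ∑' x : S, Real.negMulLog (μ (X ⁻¹' {x})).toReal

/-- Conditional Shannon entropy `H[X|Y] = ∑_y P(Y = y) · H[X ; μ conditioned on Y = y]`. -/
noncomputable def condEntropy {Ω S T : Type*} [MeasurableSpace Ω] [MeasurableSpace S]
    [MeasurableSpace T] (μ : Measure Ω) (X : Ω → S) (Y : Ω → T) : ℝ :=
  ∑' y : T, (μ (Y ⁻¹' {y})).toReal * entropy (μ[|Y ⁻¹' {y}]) X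

/-- Mutual information `I[X:Y] = H[X] + H[Y] − H[⟨X,Y⟩]`. -/
noncomputable def mutualInfo {Ω S T : Type*} [MeasurableSpace Ω] [MeasurableSpace S]
    [MeasurableSpace T] (μ : Measure Ω) (X : Ω → S) (Y : Ω → T) : ℝ :=
  entropy μ X + entropy μ Y - entropy μ (fun ω => (X ω, Y ω))

/-- Conditional mutual information
`I[X:Y|Z] = H[⟨X,Z⟩] + H[⟨Y,Z⟩] − H[⟨⟨X,Y⟩,Z⟩] − H[Z]`. -/
noncomputable def condMutualInfo {Ω S T W : Type*} [MeasurableSpace Ω] [MeasurableSpace S]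
    [MeasurableSpace T] [MeasurableSpace W] (μ : Measure Ω)
    (X : Ω → S) (Y : Ω → T) (Z : Ω → W) : ℝ :=
  entropy μ (fun ω => (X ω, Z ω)) + entropy μ (fun ω => (Y ω, Z ω))
    - entropy μ (fun ω => ((X ω, Y ω), Z ω)) - entropy μ Z

section Entropy

variable {Ω S T : Type*} [MeasurableSpace Ω] [MeasurableSpace S] [MeasurableSpace T]
  {μ : Measure Ω}

lemma entropy_eq_sum_of_finite_range {X : Ω → S} (hX : (Set.range X).Finite) :
    entropy μ X = ∑ x ∈ hX.toFinset, negMulLog (μ (X ⁻¹' {x})).toReal :=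
  tsum_eq_sum fun x hx => by
    rw [Set.preimage_singleton_eq_empty.2 (by simpa using hx)]
    simp

lemma condEntropy_eq_sum_of_finite_range (X : Ω → S) {Y : Ω → T} (hY : (Set.range Y).Finite) :
    condEntropy μ X Y =
      ∑ y ∈ hY.toFinset, (μ (Y ⁻¹' {y})).toReal * entropy μ[|Y ⁻¹' {y}] X :=
  tsum_eq_sum fun y hy => by
    rw [Set.preimage_singleton_eq_empty.2 (by simpa using hy)]
    simp

lemma negMulLog_measure_nonneg [IsZeroOrProbabilityMeasure μ] (s : Set Ω) :
    0 ≤ negMulLog (μ s).toReal :=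
  negMulLog_nonneg ENNReal.toReal_nonneg measureReal_le_one

lemma entropy_nonneg [IsZeroOrProbabilityMeasure μ] (X : Ω → S) : 0 ≤ entropy μ X :=
  tsum_nonneg fun _ => negMulLog_measure_nonneg _

lemma measure_preimage_singleton_eq_zero_or_one_of_entropy_eq_zero
    [IsZeroOrProbabilityMeasure μ] {X : Ω → S} (hX : (Set.range X).Finite)
    (h : entropy μ X = 0) (x : S) : μ (X ⁻¹' {x}) = 0 ∨ μ (X ⁻¹' {x}) = 1 := by
  by_cases hx : x ∈ Set.range X
  · rw [entropy_eq_sum_of_finite_range hX,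
      Finset.sum_eq_zero_iff_of_nonneg fun _ _ => negMulLog_measure_nonneg _] at h
    have hterm := h x (hX.mem_toFinset.2 hx)
    rw [negMulLog, neg_mul, neg_eq_zero, mul_eq_zero, Real.log_eq_zero, ← or_assoc,
      or_self] at hterm
    rcases hterm with h0 | h1 | hneg
    · exact .inl ((ENNReal.toReal_eq_zero_iff _).1 h0 |>.resolve_right (measure_ne_top μ _))
    · exact .inr ((ENNReal.toReal_eq_one_iff _).1 h1)
    · linarith [ENNReal.toReal_nonneg (a := μ (X ⁻¹' {x}))]
  · exact .inl (by rw [Set.preimage_singleton_eq_empty.2 hx, measure_empty])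

lemma exists_ae_eq_const_of_entropy_eq_zero [IsProbabilityMeasure μ] [MeasurableSingletonClass S]
    {X : Ω → S} (hXm : Measurable X) (hX : (Set.range X).Finite) (h : entropy μ X = 0) :
    ∃ x, ∀ᵐ ω ∂μ, X ω = x := by
  have hsum : ∑ x ∈ hX.toFinset, μ (X ⁻¹' {x}) = 1 := by
    rw [sum_measure_preimage_singleton _ fun x _ => hXm (measurableSet_singleton x)]
    simp
  obtain ⟨x, -, hx⟩ := Finset.exists_ne_zero_of_sum_ne_zero (hsum ▸ one_ne_zero)
  have hx1 := (measure_preimage_singleton_eq_zero_or_one_of_entropy_eq_zero hX h x).resolve_left hx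
  exact ⟨x, (prob_compl_eq_zero_iff (hXm (measurableSet_singleton x))).2 hx1⟩

lemma ae_imp_of_ae_cond {s : Set Ω} (hs : μ s ≠ ⊤) {p : Ω → Prop} (hp : MeasurableSet {ω | p ω})
    (h : ∀ᵐ ω ∂μ[|s], p ω) : ∀ᵐ ω ∂μ, ω ∈ s → p ω := by
  rw [← ae_restrict_iff hp]
  exact (Measure.absolutelyContinuous_smul (ENNReal.inv_ne_zero.2 hs)).ae_le h

lemma exists_ae_eq_comp_of_condEntropy_eq_zero [IsFiniteMeasure μ] [MeasurableSingletonClass S]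
    [Nonempty S] {Q : Ω → S} {Y : Ω → T} (hQm : Measurable Q) (hQ : (Set.range Q).Finite)
    (hY : (Set.range Y).Finite) (h : condEntropy μ Q Y = 0) :
    ∃ φ : T → S, Q =ᵐ[μ] φ ∘ Y := by
  rw [condEntropy_eq_sum_of_finite_range Q hY, Finset.sum_eq_zero_iff_of_nonneg
    fun _ _ => mul_nonneg ENNReal.toReal_nonneg (entropy_nonneg Q)] at h
  have hfibre : ∀ y ∈ Set.range Y, ∃ q, ∀ᵐ ω ∂μ, ω ∈ Y ⁻¹' {y} → Q ω = q := by
    intro y hy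
    by_cases hy0 : μ (Y ⁻¹' {y}) = 0
    · exact ⟨Classical.arbitrary S, measure_mono_null (fun _ => of_not_imp) hy0⟩
    have := cond_isProbabilityMeasure (μ := μ) hy0
    have hent : entropy μ[|Y ⁻¹' {y}] Q = 0 :=
      (mul_eq_zero.1 (h y (hY.mem_toFinset.2 hy))).resolve_left
        (ENNReal.toReal_ne_zero.2 ⟨hy0, measure_ne_top μ _⟩)
    obtain ⟨q, hq⟩ := exists_ae_eq_const_of_entropy_eq_zero hQm hQ hent
    exact ⟨q, ae_imp_of_ae_cond (measure_ne_top μ _) (hQm (measurableSet_singleton q)) hq⟩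
  choose! φ hφ using hfibre
  refine ⟨φ, ?_⟩
  filter_upwards [(Filter.eventually_all_finite hY).2 hφ] with ω hω
  exact hω (Y ω) (Set.mem_range_self ω) rfl

lemma entropy_congr_ae {X X' : Ω → S} (h : X =ᵐ[μ] X') : entropy μ X = entropy μ X' :=
  tsum_congr fun x => by rw [measure_congr (h.preimage {x})]

lemma entropy_comp_of_injective {g : T → S} (hg : g.Injective) (X : Ω → T) :
    entropy μ (g ∘ X) = entropy μ X := by
  unfold entropy
  rw [← hg.tsum_eq]
  · simp only [Set.preimage_comp, ← Set.image_singleton, hg.preimage_image]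
  · intro s hs
    by_contra hns
    refine hs ?_
    simp only [Set.preimage_singleton_eq_empty.2 fun hmem =>
      hns (Set.range_comp_subset_range X g hmem), measure_empty, ENNReal.toReal_zero,
      negMulLog_zero]

lemma entropy_prod_of_ae_eq_comp {Q : Ω → S} {Z : Ω → T} {φ : T → S} (h : Q =ᵐ[μ] φ ∘ Z) :
    entropy μ (fun ω => (Q ω, Z ω)) = entropy μ Z := by
  have hgraph : Function.Injective fun z => (φ z, z) := fun _ _ hzz => (Prod.ext_iff.1 hzz).2
  calc entropy μ (fun ω => (Q ω, Z ω)) = entropy μ ((fun z => (φ z, z)) ∘ Z) :=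
        entropy_congr_ae (h.mono fun ω hω => by simp [hω])
    _ = entropy μ Z := entropy_comp_of_injective hgraph Z

lemma mutualInfo_eq_entropy_of_ae_eq_comp {Q : Ω → S} {Z : Ω → T} {φ : T → S}
    (h : Q =ᵐ[μ] φ ∘ Z) : mutualInfo μ Q Z = entropy μ Q := by
  rw [mutualInfo, entropy_prod_of_ae_eq_comp h, add_sub_cancel_right]

end Entropy

theorem redundancy_union_target_general {Ω : Type*} [MeasurableSpace Ω]
    (μ : Measure Ω) [IsProbabilityMeasure μ]
    (n : ℕ) (Y : Ω → ℕ) (X : Fin n → Ω → ℕ)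
    (hYfin : (Set.range Y).Finite)
    (U : Ω → (Fin n → ℕ) × ℕ) (hU : U = fun ω => (fun j => X j ω, Y ω)) :
    sSup {x : ℝ | ∃ Q : Ω → ℕ, Measurable Q ∧ (Set.range Q).Finite ∧
        condEntropy μ Q Y = 0 ∧ (∀ j, condEntropy μ Q (X j) = 0) ∧
        x = mutualInfo μ Q U} =
      sSup {x : ℝ | ∃ Q : Ω → ℕ, Measurable Q ∧ (Set.range Q).Finite ∧
        condEntropy μ Q Y = 0 ∧ (∀ j, condEntropy μ Q (X j) = 0) ∧
        x = mutualInfo μ Q Y} := by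
  subst hU
  have hmutualInfo : ∀ Q : Ω → ℕ, Measurable Q → (Set.range Q).Finite → condEntropy μ Q Y = 0 →
      mutualInfo μ Q (fun ω => (fun j => X j ω, Y ω)) = mutualInfo μ Q Y := by
    intro Q hQm hQ hQY
    obtain ⟨φ, hφ⟩ := exists_ae_eq_comp_of_condEntropy_eq_zero hQm hQ hYfin hQY
    rw [mutualInfo_eq_entropy_of_ae_eq_comp hφ,
      mutualInfo_eq_entropy_of_ae_eq_comp (φ := φ ∘ Prod.snd) hφ]
  congr 1
  ext x
  refine exists_congr fun Q => and_congr_right fun hQm => and_congr_right fun hQ =>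
    and_congr_right fun hQY => and_congr_right fun _ => ?_
  rw [hmutualInfo Q hQm hQ hQY]

/-- Theorem 1, Step Two: with `U := ⟨X₁,…,X_n,Y⟩` the joint variable,
`Red(U : X₁,…,X_n,Y) = Red(Y : X₁,…,X_n,Y)` for the ordering `Q ⊏ X ↔ H[Q|X] = 0`. -/
theorem redundancy_union_target {Ω : Type*} [MeasurableSpace Ω]
    (μ : Measure Ω) [IsProbabilityMeasure μ]
    (n : ℕ) (Y : Ω → ℕ) (X : Fin n → Ω → ℕ)
    (hY : Measurable Y) (hYfin : (Set.range Y).Finite)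
    (hX : ∀ i, Measurable (X i)) (hXfin : ∀ i, (Set.range (X i)).Finite)
    (U : Ω → (Fin n → ℕ) × ℕ) (hU : U = fun ω => (fun j => X j ω, Y ω)) :
    sSup {x : ℝ | ∃ Q : Ω → ℕ, Measurable Q ∧ (Set.range Q).Finite ∧
        condEntropy μ Q Y = 0 ∧ (∀ j, condEntropy μ Q (X j) = 0) ∧
        x = mutualInfo μ Q U} =
      sSup {x : ℝ | ∃ Q : Ω → ℕ, Measurable Q ∧ (Set.range Q).Finite ∧
        condEntropy μ Q Y = 0 ∧ (∀ j, condEntropy μ Q (X j) = 0) ∧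
        x = mutualInfo μ Q Y} :=
  redundancy_union_target_general μ n Y X hYfin U hU
end

section
/- (Case 3.) Let (Ω, μ) be a probability space and a, b, c, d, e, f : Ω → Bool be an independent family of random variables, each uniformly distributed on Bool, and set g := xor ∘ ⟨c, e⟩ and h := xor ∘ ⟨d, f⟩. Define X₁ := ⟨a,b,c,d⟩, X₂ := ⟨a,b,e,f⟩, X₅ := ⟨a,b,g,h⟩ (valued in Bool⁴). Then: H[X₁] = H[X₂] = H[X₅] = 4·log 2; I[X_i : X_j] = 2·log 2 and H[X_i | X_j] = 2·log 2 for every pair of distinct variables among X₁, X₂, X₅; H[⟨X₁, X₂, X₅⟩] = 6·log 2; each of H[X₁ | ⟨X₂,X₅⟩], H[X₂ | ⟨X₁,X₅⟩], H[X₅ | ⟨X₁,X₂⟩] equals 0; and I[X₁ : X₂ | X₅] = 2·log 2. -/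
/-!
The vector `W = (a, b, c, d, e, f)` is uniform on `Bool⁶`, so `H[W] = 6 log 2`. Each of `X₁`, `X₂`,
`X₅` is a function of `W` all of whose fibres have 4 elements, hence uniform on `Bool⁴` with entropy
`4 log 2`. Any two of them determine `W` (for instance `e = c ⊕ g` and `f = d ⊕ h`), so every pair
and the triple have entropy `6 log 2`, and each `Xᵢ` has zero conditional entropy given the other
two. The remaining values follow from the chain rule `H[X|Y] = H[⟨X,Y⟩] - H[Y]`.
-/

open MeasureTheory ProbabilityTheory Real

open Function Finset
open scoped ENNReal

def IsUniformlyDistributed {Ω S : Type*} [MeasurableSpace Ω] [Fintype S] (μ : Measure Ω)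
    (X : Ω → S) : Prop :=
  ∀ s, μ (X ⁻¹' {s}) = (Fintype.card S : ℝ≥0∞)⁻¹

section Entropy

variable {Ω S T α : Type*} [MeasurableSpace Ω] {μ : Measure Ω} [MeasurableSpace S]
  [MeasurableSpace T]

theorem entropy_comp_of_injective_s13 (X : Ω → S) {φ : S → T} (hφ : Injective φ) :
    entropy μ (fun ω => φ (X ω)) = entropy μ X := by
  have hfiber (s : S) : (fun ω => φ (X ω)) ⁻¹' {φ s} = X ⁻¹' {s} := by
    ext ω; simp [hφ.eq_iff]
  unfold entropy
  rw [← hφ.tsum_eq]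
  · simp only [hfiber]
  · intro t ht
    by_contra hrange
    have hempty : (fun ω => φ (X ω)) ⁻¹' {t} = ∅ :=
      Set.eq_empty_of_forall_notMem fun ω hω => hrange ⟨X ω, hω⟩
    simp [hempty] at ht

theorem IsUniformlyDistributed.entropy_eq [Fintype S] {X : Ω → S}
    (hX : IsUniformlyDistributed μ X) : entropy μ X = log (Fintype.card S) := by
  have hterm (s : S) :
      negMulLog (μ (X ⁻¹' {s})).toReal = negMulLog (Fintype.card S : ℝ)⁻¹ := by
    rw [hX s, ENNReal.toReal_inv, ENNReal.toReal_natCast]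
  rw [entropy, tsum_fintype, sum_congr rfl fun s _ => hterm s, sum_const, card_univ,
    nsmul_eq_mul, negMulLog, log_inv]
  rcases eq_or_ne (Fintype.card S) 0 with h | h
  · simp [h]
  · field_simp

variable [Fintype S]

theorem entropy_prod_eq_sum_sum [Fintype T] (X : Ω → S) (Y : Ω → T) :
    entropy μ (fun ω => (X ω, Y ω))
      = ∑ y, ∑ x, negMulLog (μ (X ⁻¹' {x} ∩ Y ⁻¹' {y})).toReal := by
  simp only [entropy, tsum_fintype, Fintype.sum_prod_type_right, ← Set.singleton_prod_singleton,
    Set.mk_preimage_prod]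

variable [MeasurableSingletonClass S] [MeasurableSingletonClass T]

theorem sum_measure_preimage_singleton_inter {X : Ω → S} (hX : Measurable X) (s : Set Ω) :
    ∑ x, μ (X ⁻¹' {x} ∩ s) = μ s := by
  have := sum_measure_preimage_singleton (μ := μ.restrict s) univ
    fun x _ => hX (measurableSet_singleton x)
  simpa [Measure.restrict_apply (hX (measurableSet_singleton _))] using this

theorem toReal_measure_mul_entropy_cond [IsFiniteMeasure μ] {X : Ω → S} {Y : Ω → T}
    (hX : Measurable X) (hY : Measurable Y) (y : T) :
    (μ (Y ⁻¹' {y})).toReal * entropy μ[|Y ⁻¹' {y}] X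
      = ∑ x, negMulLog (μ (X ⁻¹' {x} ∩ Y ⁻¹' {y})).toReal
        - negMulLog (μ (Y ⁻¹' {y})).toReal := by
  set p : S → ℝ := fun x => (μ (X ⁻¹' {x} ∩ Y ⁻¹' {y})).toReal
  set q := (μ (Y ⁻¹' {y})).toReal
  have hsum : ∑ x, p x = q := by
    rw [← ENNReal.toReal_sum fun x _ => measure_ne_top μ _,
      sum_measure_preimage_singleton_inter hX]
  rcases eq_or_ne q 0 with hq | hq
  · have hnull (x : S) : p x = 0 :=
      (sum_eq_zero_iff_of_nonneg fun _ _ => ENNReal.toReal_nonneg).1 (hsum.trans hq) x (mem_univ x)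
    simp [hq, p, hnull]
  have hcond (x : S) : (μ[|Y ⁻¹' {y}] (X ⁻¹' {x})).toReal = q⁻¹ * p x := by
    rw [cond_apply (hY (measurableSet_singleton y)), ENNReal.toReal_mul, ENNReal.toReal_inv,
      Set.inter_comm]
  rw [entropy, tsum_fintype, mul_sum]
  simp only [hcond, negMulLog_mul, mul_add, ← mul_assoc, mul_inv_cancel₀ hq, one_mul]
  rw [sum_add_distrib, ← sum_mul, ← mul_sum, hsum]
  simp only [negMulLog, log_inv]
  field_simp
  ring

variable [Fintype T]

theorem condEntropy_eq_entropy_prod_sub [IsFiniteMeasure μ] {X : Ω → S} {Y : Ω → T}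
    (hX : Measurable X) (hY : Measurable Y) :
    condEntropy μ X Y = entropy μ (fun ω => (X ω, Y ω)) - entropy μ Y := by
  rw [condEntropy, tsum_fintype, entropy_prod_eq_sum_sum, entropy, tsum_fintype,
    ← sum_sub_distrib]
  exact sum_congr rfl fun y _ => toReal_measure_mul_entropy_cond hX hY y

theorem condEntropy_comp_eq_zero_of_injective [IsFiniteMeasure μ] [MeasurableSpace α]
    [Countable α] [MeasurableSingletonClass α] {V : Ω → α} (hV : Measurable V) (χ : α → S)
    {ψ : α → T} (hψ : Injective ψ) :
    condEntropy μ (fun ω => χ (V ω)) (fun ω => ψ (V ω)) = 0 := by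
  have hχψ : Injective fun a => (χ a, ψ a) := fun _ _ h => hψ (congrArg Prod.snd h)
  rw [condEntropy_eq_entropy_prod_sub ((measurable_of_countable χ).fun_comp hV)
      ((measurable_of_countable ψ).fun_comp hV),
    entropy_comp_of_injective_s13 V hχψ, entropy_comp_of_injective_s13 V hψ, sub_self]

end Entropy

section Uniform

variable {Ω α β T : Type*} [MeasurableSpace Ω] {μ : Measure Ω}

theorem IsUniformlyDistributed.comp [Fintype α] [Nonempty α] [MeasurableSpace α]
    [MeasurableSingletonClass α] [Fintype T] [DecidableEq T] {V : Ω → α}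
    (hV : IsUniformlyDistributed μ V) (hmeas : Measurable V) {φ : α → T}
    (hφ : ∀ t, #{a | φ a = t} * Fintype.card T = Fintype.card α) :
    IsUniformlyDistributed μ fun ω => φ (V ω) := by
  intro t
  have hpre : (fun ω => φ (V ω)) ⁻¹' {t} = V ⁻¹' ↑({a | φ a = t} : Finset α) := by
    ext; simp
  have hfiber : (#{a | φ a = t} : ℝ≥0∞) ≠ 0 := by
    have := hφ t ▸ Fintype.card_ne_zero (α := α)
    exact_mod_cast left_ne_zero_of_mul this
  rw [hpre, ← sum_measure_preimage_singleton _ fun a _ => hmeas (measurableSet_singleton a),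
    sum_congr rfl fun a _ => hV a, sum_const, nsmul_eq_mul, ← hφ t, Nat.cast_mul,
    ENNReal.mul_inv (by simp) (by simp), ← mul_assoc, ENNReal.mul_inv_cancel hfiber (by simp),
    one_mul]

theorem ProbabilityTheory.iIndepFun.isUniformlyDistributed_pi {ι : Type*} [Fintype ι]
    [DecidableEq ι] [Fintype β] [MeasurableSpace β] [MeasurableSingletonClass β]
    {X : ι → Ω → β} (h : iIndepFun X μ) (hX : ∀ i, IsUniformlyDistributed μ (X i)) :
    IsUniformlyDistributed μ fun ω i => X i ω := by
  intro v
  have hpre : (fun ω i => X i ω) ⁻¹' {v} = ⋂ i ∈ univ, X i ⁻¹' {v i} := by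
    ext; simp [funext_iff]
  rw [hpre, h.measure_inter_preimage_eq_mul _ fun i _ => measurableSet_singleton _,
    prod_congr rfl fun i _ => hX i (v i), prod_const, card_univ, Fintype.card_fun, Nat.cast_pow,
    ENNReal.inv_pow]

end Uniform

/- A point `v : Fin 6 → Bool` lists the values of `(a, b, c, d, e, f)`; `x₁`, `x₂`, `x₅` express
`X₁`, `X₂`, `X₅` through it. -/
namespace SidCase3

def x₁ (v : Fin 6 → Bool) : Bool × Bool × Bool × Bool := (v 0, v 1, v 2, v 3)

def x₂ (v : Fin 6 → Bool) : Bool × Bool × Bool × Bool := (v 0, v 1, v 4, v 5)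

def x₅ (v : Fin 6 → Bool) : Bool × Bool × Bool × Bool :=
  (v 0, v 1, xor (v 2) (v 4), xor (v 3) (v 5))

theorem card_fiber_x₁ (t : Bool × Bool × Bool × Bool) :
    #{v | x₁ v = t} * Fintype.card (Bool × Bool × Bool × Bool) = Fintype.card (Fin 6 → Bool) := by
  revert t; decide

theorem card_fiber_x₂ (t : Bool × Bool × Bool × Bool) :
    #{v | x₂ v = t} * Fintype.card (Bool × Bool × Bool × Bool) = Fintype.card (Fin 6 → Bool) := by
  revert t; decide

theorem card_fiber_x₅ (t : Bool × Bool × Bool × Bool) :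
    #{v | x₅ v = t} * Fintype.card (Bool × Bool × Bool × Bool) = Fintype.card (Fin 6 → Bool) := by
  revert t; decide

theorem injective_x₁_x₂ : Injective fun v => (x₁ v, x₂ v) := by decide

theorem injective_x₁_x₅ : Injective fun v => (x₁ v, x₅ v) := by decide

theorem injective_x₂_x₅ : Injective fun v => (x₂ v, x₅ v) := by decide

theorem injective_x₂_x₁ : Injective fun v => (x₂ v, x₁ v) :=
  Prod.swap_injective.comp injective_x₁_x₂

theorem injective_x₅_x₁ : Injective fun v => (x₅ v, x₁ v) :=
  Prod.swap_injective.comp injective_x₁_x₅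

theorem injective_x₅_x₂ : Injective fun v => (x₅ v, x₂ v) :=
  Prod.swap_injective.comp injective_x₂_x₅

theorem injective_x₁_x₂₅ : Injective fun v => (x₁ v, x₂ v, x₅ v) :=
  fun _ _ h => injective_x₂_x₅ (congrArg Prod.snd h)

theorem injective_x₁₂_x₅ : Injective fun v => ((x₁ v, x₂ v), x₅ v) :=
  fun _ _ h => injective_x₁_x₂ (congrArg Prod.fst h)

end SidCase3

open SidCase3

/-- Case 3: g = c ⊕ e, h = d ⊕ f, X₁=⟨a,b,c,d⟩, X₂=⟨a,b,e,f⟩, X₅=⟨a,b,g,h⟩. -/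
theorem sid_case3 {Ω : Type*} [MeasurableSpace Ω]
    (μ : Measure Ω) [IsProbabilityMeasure μ]
    (a b c d e f : Ω → Bool)
    (hmeas : ∀ i, Measurable (![a, b, c, d, e, f] i))
    (hindep : iIndepFun ![a, b, c, d, e, f] μ)
    (hunif : ∀ i x, μ (![a, b, c, d, e, f] i ⁻¹' {x}) = 1 / 2)
    (g h : Ω → Bool) (hg : g = fun ω => xor (c ω) (e ω)) (hh : h = fun ω => xor (d ω) (f ω))
    (X₁ X₂ X₅ : Ω → Bool × Bool × Bool × Bool)
    (hX₁ : X₁ = fun ω => (a ω, b ω, c ω, d ω))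
    (hX₂ : X₂ = fun ω => (a ω, b ω, e ω, f ω))
    (hX₅ : X₅ = fun ω => (a ω, b ω, g ω, h ω)) :
    entropy μ X₁ = 4 * Real.log 2 ∧
      entropy μ X₂ = 4 * Real.log 2 ∧
      entropy μ X₅ = 4 * Real.log 2 ∧
      mutualInfo μ X₁ X₂ = 2 * Real.log 2 ∧
      mutualInfo μ X₁ X₅ = 2 * Real.log 2 ∧
      mutualInfo μ X₂ X₅ = 2 * Real.log 2 ∧
      mutualInfo μ X₂ X₁ = 2 * Real.log 2 ∧
      mutualInfo μ X₅ X₁ = 2 * Real.log 2 ∧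
      mutualInfo μ X₅ X₂ = 2 * Real.log 2 ∧
      condEntropy μ X₁ X₂ = 2 * Real.log 2 ∧
      condEntropy μ X₁ X₅ = 2 * Real.log 2 ∧
      condEntropy μ X₂ X₅ = 2 * Real.log 2 ∧
      condEntropy μ X₂ X₁ = 2 * Real.log 2 ∧
      condEntropy μ X₅ X₁ = 2 * Real.log 2 ∧
      condEntropy μ X₅ X₂ = 2 * Real.log 2 ∧
      entropy μ (fun ω => (X₁ ω, X₂ ω, X₅ ω)) = 6 * Real.log 2 ∧
      condEntropy μ X₁ (fun ω => (X₂ ω, X₅ ω)) = 0 ∧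
      condEntropy μ X₁ (fun ω => (X₅ ω, X₂ ω)) = 0 ∧
      condEntropy μ X₂ (fun ω => (X₁ ω, X₅ ω)) = 0 ∧
      condEntropy μ X₂ (fun ω => (X₅ ω, X₁ ω)) = 0 ∧
      condEntropy μ X₅ (fun ω => (X₁ ω, X₂ ω)) = 0 ∧
      condEntropy μ X₅ (fun ω => (X₂ ω, X₁ ω)) = 0 ∧
      condMutualInfo μ X₁ X₂ X₅ = 2 * Real.log 2 := by
  obtain ⟨W, hWmeas, hWunif, rfl, rfl, rfl⟩ : ∃ W : Ω → Fin 6 → Bool, Measurable W ∧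
      IsUniformlyDistributed μ W ∧ X₁ = (fun ω => x₁ (W ω)) ∧ X₂ = (fun ω => x₂ (W ω)) ∧
      X₅ = fun ω => x₅ (W ω) := by
    refine ⟨fun ω i => ![a, b, c, d, e, f] i ω, measurable_pi_lambda _ hmeas,
      hindep.isUniformlyDistributed_pi fun i x => by simp [hunif], ?_, ?_, ?_⟩ <;>
    subst_vars <;> rfl
  have hinj {T : Type} [MeasurableSpace T] {ψ : (Fin 6 → Bool) → T} (hψ : Injective ψ) :
      entropy μ (fun ω => ψ (W ω)) = 6 * log 2 := by
    rw [entropy_comp_of_injective_s13 W hψ, hWunif.entropy_eq, Fintype.card_fun, Fintype.card_bool,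
      Fintype.card_fin, Nat.cast_pow, Real.log_pow]
    norm_num
  have hbal {φ : (Fin 6 → Bool) → Bool × Bool × Bool × Bool}
      (hφ : ∀ t, #{v | φ v = t} * Fintype.card (Bool × Bool × Bool × Bool)
        = Fintype.card (Fin 6 → Bool)) : entropy μ (fun ω => φ (W ω)) = 4 * log 2 := by
    rw [(hWunif.comp hWmeas hφ).entropy_eq, show Fintype.card (Bool × Bool × Bool × Bool) = 2 ^ 4
      from rfl, Nat.cast_pow, Real.log_pow]
    norm_num
  have hchain (φ ψ : (Fin 6 → Bool) → Bool × Bool × Bool × Bool) :=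
    condEntropy_eq_entropy_prod_sub (μ := μ) ((measurable_of_countable φ).fun_comp hWmeas)
      ((measurable_of_countable ψ).fun_comp hWmeas)
  refine ⟨hbal card_fiber_x₁, hbal card_fiber_x₂, hbal card_fiber_x₅, ?_, ?_, ?_, ?_, ?_, ?_, ?_,
    ?_, ?_, ?_, ?_, ?_, hinj injective_x₁_x₂₅,
    condEntropy_comp_eq_zero_of_injective hWmeas _ injective_x₂_x₅,
    condEntropy_comp_eq_zero_of_injective hWmeas _ injective_x₅_x₂,
    condEntropy_comp_eq_zero_of_injective hWmeas _ injective_x₁_x₅,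
    condEntropy_comp_eq_zero_of_injective hWmeas _ injective_x₅_x₁,
    condEntropy_comp_eq_zero_of_injective hWmeas _ injective_x₁_x₂,
    condEntropy_comp_eq_zero_of_injective hWmeas _ injective_x₂_x₁, ?_⟩
  all_goals
    simp only [mutualInfo, condMutualInfo, hchain, hbal card_fiber_x₁, hbal card_fiber_x₂,
      hbal card_fiber_x₅, hinj injective_x₁_x₂, hinj injective_x₂_x₁, hinj injective_x₁_x₅,
      hinj injective_x₅_x₁, hinj injective_x₂_x₅, hinj injective_x₅_x₂, hinj injective_x₁₂_x₅]
    ring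
end
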